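/- Let R := (1/√2) · [[1,0,0,1],[0,1,1,0],[0,−1,1,0],[−1,0,0,1]] (the Ising solution). Then: (a) R satisfies the Yang–Baxter equation; (b) R is a real orthogonal (hence unitary) matrix; and (c) R is simple as a Yang–Baxter object: there is no nonzero vector v ∈ ℂ² and scalar λ with R(v ⊗ v) = λ(v ⊗ v), and likewise no nonzero v and λ with Rᵀ(v ⊗ v) = λ(v ⊗ v). -/

import Mathlib

/-!
Up to the scalar `1/√2` the Ising matrix has integer entries, and the Yang–Baxter equation is
homogeneous, so it and `R Rᵀ = 1` reduce to identities between integer matrices. For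
`v = (x, y)`, the two middle coordinates of `R (v ⊗ v) = μ (v ⊗ v)` force `xy = 0`, and then the
two outer ones force `x⁴ = y⁴ = 0`.
-/

open Matrix Kronecker

/-- `R ⊗ₖ 1`, viewed as a matrix indexed by `ι × ι × ι` via the canonical
associativity reindexing. -/
def ybL {ι : Type*} [DecidableEq ι] (R : Matrix (ι × ι) (ι × ι) ℂ) :
    Matrix (ι × ι × ι) (ι × ι × ι) ℂ :=
  Matrix.reindex (Equiv.prodAssoc ι ι ι) (Equiv.prodAssoc ι ι ι)
    (R ⊗ₖ (1 : Matrix ι ι ℂ))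

/-- `1 ⊗ₖ R`, indexed by `ι × ι × ι`. -/
def ybR {ι : Type*} [DecidableEq ι] (R : Matrix (ι × ι) (ι × ι) ℂ) :
    Matrix (ι × ι × ι) (ι × ι × ι) ℂ :=
  (1 : Matrix ι ι ℂ) ⊗ₖ R

/-- The (constant) Yang–Baxter equation. -/
def SatisfiesYBE {ι : Type*} [Fintype ι] [DecidableEq ι]
    (R : Matrix (ι × ι) (ι × ι) ℂ) : Prop :=
  ybL R * ybR R * ybL R = ybR R * ybL R * ybR R


/-- The Ising Yang–Baxter operator
`(1/√2) · [[1,0,0,1],[0,1,1,0],[0,−1,1,0],[−1,0,0,1]]` in the ordered basis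
`|11⟩, |21⟩, |12⟩, |22⟩` (indexed by `Fin 2 × Fin 2`). -/
noncomputable def ising : Matrix (Fin 2 × Fin 2) (Fin 2 × Fin 2) ℂ :=
  (1 / (Real.sqrt 2 : ℂ)) • Matrix.of fun r c =>
    if r = ((0, 0) : Fin 2 × Fin 2) ∧ c = ((0, 0) : Fin 2 × Fin 2) then 1 else
    if r = ((0, 0) : Fin 2 × Fin 2) ∧ c = ((1, 1) : Fin 2 × Fin 2) then 1 else
    if r = ((1, 0) : Fin 2 × Fin 2) ∧ c = ((1, 0) : Fin 2 × Fin 2) then 1 else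
    if r = ((1, 0) : Fin 2 × Fin 2) ∧ c = ((0, 1) : Fin 2 × Fin 2) then 1 else
    if r = ((0, 1) : Fin 2 × Fin 2) ∧ c = ((1, 0) : Fin 2 × Fin 2) then -1 else
    if r = ((0, 1) : Fin 2 × Fin 2) ∧ c = ((0, 1) : Fin 2 × Fin 2) then 1 else
    if r = ((1, 1) : Fin 2 × Fin 2) ∧ c = ((0, 0) : Fin 2 × Fin 2) then -1 else
    if r = ((1, 1) : Fin 2 × Fin 2) ∧ c = ((1, 1) : Fin 2 × Fin 2) then 1 else 0

section YangBaxter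

variable {ι : Type*} [DecidableEq ι]

theorem ybL_smul (c : ℂ) (R : Matrix (ι × ι) (ι × ι) ℂ) : ybL (c • R) = c • ybL R := by
  rw [ybL, smul_kronecker, Matrix.reindex_apply, submatrix_smul]; rfl

theorem ybR_smul (c : ℂ) (R : Matrix (ι × ι) (ι × ι) ℂ) : ybR (c • R) = c • ybR R :=
  kronecker_smul c _ _

theorem ybL_map {α : Type*} [Semiring α] (f : α →+* ℂ) (A : Matrix (ι × ι) (ι × ι) α) :
    ybL (A.map f) =
      (reindex (Equiv.prodAssoc ι ι ι) (Equiv.prodAssoc ι ι ι) (A ⊗ₖ (1 : Matrix ι ι α))).map f := by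
  ext ⟨a, b, c⟩ ⟨d, e, g⟩
  simp [ybL, kroneckerMap_apply, one_apply, apply_ite f]

theorem ybR_map {α : Type*} [Semiring α] (f : α →+* ℂ) (A : Matrix (ι × ι) (ι × ι) α) :
    ybR (A.map f) = ((1 : Matrix ι ι α) ⊗ₖ A).map f := by
  ext ⟨a, b, c⟩ ⟨d, e, g⟩
  simp [ybR, kroneckerMap_apply, one_apply, apply_ite f]

variable [Fintype ι]

theorem SatisfiesYBE.smul {R : Matrix (ι × ι) (ι × ι) ℂ} (h : SatisfiesYBE R) (c : ℂ) :
    SatisfiesYBE (c • R) := by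
  unfold SatisfiesYBE at h ⊢
  simp only [ybL_smul, ybR_smul, Matrix.smul_mul, Matrix.mul_smul, h]

end YangBaxter

theorem conjTranspose_eq_transpose_of_forall_im_eq_zero {m n : Type*} {A : Matrix m n ℂ}
    (h : ∀ i j, (A i j).im = 0) : Aᴴ = Aᵀ := by
  ext i j
  exact Complex.conj_eq_iff_im.mpr (h j i)

def isingInt : Matrix (Fin 2 × Fin 2) (Fin 2 × Fin 2) ℤ :=
  Matrix.of fun r c =>
    if r = ((0, 0) : Fin 2 × Fin 2) ∧ c = ((0, 0) : Fin 2 × Fin 2) then 1 else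
    if r = ((0, 0) : Fin 2 × Fin 2) ∧ c = ((1, 1) : Fin 2 × Fin 2) then 1 else
    if r = ((1, 0) : Fin 2 × Fin 2) ∧ c = ((1, 0) : Fin 2 × Fin 2) then 1 else
    if r = ((1, 0) : Fin 2 × Fin 2) ∧ c = ((0, 1) : Fin 2 × Fin 2) then 1 else
    if r = ((0, 1) : Fin 2 × Fin 2) ∧ c = ((1, 0) : Fin 2 × Fin 2) then -1 else
    if r = ((0, 1) : Fin 2 × Fin 2) ∧ c = ((0, 1) : Fin 2 × Fin 2) then 1 else
    if r = ((1, 1) : Fin 2 × Fin 2) ∧ c = ((0, 0) : Fin 2 × Fin 2) then -1 else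
    if r = ((1, 1) : Fin 2 × Fin 2) ∧ c = ((1, 1) : Fin 2 × Fin 2) then 1 else 0

theorem isingInt_ybe :
    let L := reindex (Equiv.prodAssoc _ _ _) (Equiv.prodAssoc _ _ _)
      (isingInt ⊗ₖ (1 : Matrix (Fin 2) (Fin 2) ℤ))
    let R := (1 : Matrix (Fin 2) (Fin 2) ℤ) ⊗ₖ isingInt
    L * R * L = R * L * R := by
  decide

theorem isingInt_mul_transpose : isingInt * isingIntᵀ = 2 := by decide

theorem ising_eq_smul_map : ising = (1 / (√2 : ℂ)) • isingInt.map (Int.castRingHom ℂ) := by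
  ext p q
  simp only [ising, isingInt, Matrix.smul_apply, map_apply, of_apply,
    apply_ite (Int.castRingHom ℂ)]
  norm_num

theorem satisfiesYBE_ising : SatisfiesYBE ising := by
  rw [ising_eq_smul_map]
  refine SatisfiesYBE.smul ?_ _
  simp only [SatisfiesYBE, ybL_map, ybR_map, ← Matrix.map_mul, isingInt_ybe]

theorem ising_im (p q : Fin 2 × Fin 2) : (ising p q).im = 0 := by
  simp [ising_eq_smul_map]

theorem ising_mul_transpose : ising * isingᵀ = 1 := by
  have hc : 1 / (√2 : ℂ) * (1 / √2) = 2⁻¹ := by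
    rw [one_div, ← mul_inv, ← Complex.ofReal_mul, Real.mul_self_sqrt zero_le_two]; norm_num
  rw [ising_eq_smul_map, transpose_smul, ← transpose_map, Matrix.smul_mul, Matrix.mul_smul,
    smul_smul, ← Matrix.map_mul, isingInt_mul_transpose, hc]
  ext i j
  simp [ofNat_apply, one_apply]

/-- The coordinate equations of `R (v ⊗ v) = μ (v ⊗ v)` for `v = (x, y)` and `R = c • isingInt`:
its `|11⟩` and `|22⟩` rows and the difference of its `|21⟩` and `|12⟩` rows. For `Rᵀ` one gets
the same system in `(y, x)`. -/
theorem eq_zero_of_ising_eigen_system {c μ x y : ℂ} (hc : c ≠ 0)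
    (h₁ : c * (x ^ 2 + y ^ 2) = μ * x ^ 2) (h₂ : c * (y ^ 2 - x ^ 2) = μ * y ^ 2)
    (h₃ : c * (x * y) = 0) : x = 0 ∧ y = 0 := by
  have hxy : x * y = 0 := (mul_eq_zero.1 h₃).resolve_left hc
  have hx : c * x ^ 4 = 0 := by linear_combination -x ^ 2 * h₂ + (c - μ) * x * y * hxy
  have hy : c * y ^ 4 = 0 := by linear_combination y ^ 2 * h₁ - (c - μ) * x * y * hxy
  exact ⟨pow_eq_zero_iff four_ne_zero |>.1 ((mul_eq_zero.1 hx).resolve_left hc),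
    pow_eq_zero_iff four_ne_zero |>.1 ((mul_eq_zero.1 hy).resolve_left hc)⟩

theorem not_exists_ising_mulVec_tensor_eigen : ¬ ∃ (v : Fin 2 → ℂ) (μ : ℂ), v ≠ 0 ∧
    ising.mulVec (fun p => v p.1 * v p.2) = μ • fun p : Fin 2 × Fin 2 => v p.1 * v p.2 := by
  rintro ⟨v, μ, hv, h⟩
  have e := congrFun h
  simp only [mulVec, dotProduct, ising, one_div, Matrix.smul_apply, of_apply, smul_eq_mul,
    mul_ite, mul_one, mul_neg, mul_zero, ite_mul, neg_mul, zero_mul, Fintype.sum_prod_type,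
    Prod.mk.injEq, Fin.sum_univ_two, and_true, zero_ne_one, and_false, ↓reduceIte, one_ne_zero,
    Pi.smul_apply, Prod.forall, Fin.forall_fin_two, add_zero, zero_add] at e
  obtain ⟨⟨e₁, e₂⟩, e₃, e₄⟩ := e
  obtain ⟨hx, hy⟩ := eq_zero_of_ising_eigen_system (c := (√2 : ℂ)⁻¹) (μ := μ)
    (x := v 0) (y := v 1) (by simp)
    (by linear_combination e₁) (by linear_combination e₄) (by linear_combination (e₃ - e₂) / 2)
  exact hv (funext (Fin.forall_fin_two.2 ⟨hx, hy⟩))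

theorem not_exists_ising_transpose_mulVec_tensor_eigen : ¬ ∃ (v : Fin 2 → ℂ) (μ : ℂ), v ≠ 0 ∧
    isingᵀ.mulVec (fun p => v p.1 * v p.2) = μ • fun p : Fin 2 × Fin 2 => v p.1 * v p.2 := by
  rintro ⟨v, μ, hv, h⟩
  have e := congrFun h
  simp only [mulVec, dotProduct, ising, one_div, smul_of, transpose_apply, of_apply,
    Pi.smul_apply, smul_eq_mul, mul_ite, mul_one, mul_neg, mul_zero, ite_mul, neg_mul, zero_mul,
    Fintype.sum_prod_type, Prod.mk.injEq, Fin.sum_univ_two, and_true, zero_ne_one, and_false,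
    false_and, ↓reduceIte, one_ne_zero, true_and, Prod.forall, Fin.forall_fin_two, add_zero,
    zero_add] at e
  obtain ⟨⟨e₁, e₂⟩, e₃, e₄⟩ := e
  obtain ⟨hy, hx⟩ := eq_zero_of_ising_eigen_system (c := (√2 : ℂ)⁻¹) (μ := μ)
    (x := v 1) (y := v 0) (by simp)
    (by linear_combination e₄) (by linear_combination e₁) (by linear_combination (e₂ - e₃) / 2)
  exact hv (funext (Fin.forall_fin_two.2 ⟨hx, hy⟩))

/-- the Ising solution (a) satisfies the Yang–Baxter equation,
(b) is real orthogonal (hence unitary), and (c) is simple as a Yang–Baxter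
object: `R` has no (right or left) eigenvector of the form `v ⊗ v` with
`v ≠ 0`. -/
theorem ising_ybe_unitary_simple :
    SatisfiesYBE ising ∧
    ((∀ p q : Fin 2 × Fin 2, (ising p q).im = 0) ∧
      ising * isingᵀ = 1 ∧ ising * isingᴴ = 1) ∧
    (¬ ∃ (v : Fin 2 → ℂ) (lam : ℂ), v ≠ 0 ∧
        ising.mulVec (fun p => v p.1 * v p.2) = lam • fun p : Fin 2 × Fin 2 => v p.1 * v p.2) ∧
    (¬ ∃ (v : Fin 2 → ℂ) (lam : ℂ), v ≠ 0 ∧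
        isingᵀ.mulVec (fun p => v p.1 * v p.2)
          = lam • fun p : Fin 2 × Fin 2 => v p.1 * v p.2) := by
  refine ⟨satisfiesYBE_ising, ⟨ising_im, ising_mul_transpose, ?_⟩,
    not_exists_ising_mulVec_tensor_eigen, not_exists_ising_transpose_mulVec_tensor_eigen⟩
  rw [conjTranspose_eq_transpose_of_forall_im_eq_zero ising_im, ising_mul_transpose]
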